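/- Let 𝒜 be an admissible Banach A-valued function algebra with property 𝒫 and 𝔄 = 𝒜 ∩ C(X). If ‖ĝ‖ ≤ ‖g‖_X for all g ∈ 𝔄 (spectral radius dominated by sup norm on the scalar subalgebra), then ‖f̂‖ ≤ ‖f‖_X for all f ∈ 𝒜. -/
import Mathlib


open WeakDual

variable {X : Type*} [TopologicalSpace X] [CompactSpace X] [T2Space X] [Nonempty X]
variable {A : Type*} [NormedCommRing A] [NormedAlgebra ℂ A] [CompleteSpace A] [Nontrivial A]
variable {B : Type*} [NormedCommRing B] [NormedAlgebra ℂ B] [CompleteSpace B]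

/-- The embedding of scalar-valued continuous functions into `A`-valued ones,
`g ↦ g·𝟏`. -/
noncomputable def scalHom (X A : Type*) [TopologicalSpace X] [NormedCommRing A]
    [NormedAlgebra ℂ A] : C(X, ℂ) →ₐ[ℂ] C(X, A) :=
  AlgHom.compLeftContinuous ℂ (Algebra.ofId ℂ A) (continuous_algebraMap ℂ A)

/-- The scalar subalgebra `𝔄 = 𝒜 ∩ C(X)`, realized inside `C(X, ℂ)`: those scalar
functions `g` with `g·𝟏 ∈ 𝒜`. -/
noncomputable def scalarSub (ι : B →ₐ[ℂ] C(X, A)) : Subalgebra ℂ C(X, ℂ) :=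
  Subalgebra.comap (scalHom X A) (AlgHom.range ι)

lemma pow_le_aux {r s C : ℝ} (hs : 0 ≤ s) (h : ∀ n : ℕ, 0 < n → r ^ n ≤ s ^ n * C) :
    r ≤ s := by
  by_contra hlt
  push_neg at hlt
  have hrpos : 0 < r := lt_of_le_of_lt hs hlt
  have hq : s / r < 1 := (div_lt_one hrpos).2 hlt
  have hq0 : 0 ≤ s / r := div_nonneg hs hrpos.le
  have htend : Filter.Tendsto (fun n : ℕ => (s / r) ^ n * C) Filter.atTop (nhds 0) := by
    simpa using (tendsto_pow_atTop_nhds_zero_of_lt_one hq0 hq).mul_const C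
  have hone : ∀ᶠ n : ℕ in Filter.atTop, (1 : ℝ) ≤ (s / r) ^ n * C := by
    filter_upwards [Filter.eventually_gt_atTop 0] with n hn
    have := h n hn
    rw [div_pow, div_mul_eq_mul_div, le_div_iff₀ (pow_pos hrpos n), one_mul]
    linarith
  have : (0 : ℝ) ≥ 1 := ge_of_tendsto htend hone
  linarith

lemma char_bound {A : Type*} [NormedCommRing A] [NormedAlgebra ℂ A] [CompleteSpace A]
    (φ : A →ₐ[ℂ] ℂ) (a : A) : ‖φ a‖ ≤ ‖a‖ := by
  refine pow_le_aux (norm_nonneg a) (C := ‖(1 : A)‖) fun n hn => ?_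
  calc ‖φ a‖ ^ n = ‖φ (a ^ n)‖ := by rw [map_pow, norm_pow]
    _ ≤ ‖a ^ n‖ * ‖(1 : A)‖ := AlgHom.norm_apply_le_self_mul_norm_one φ _
    _ ≤ ‖a‖ ^ n * ‖(1 : A)‖ :=
        mul_le_mul_of_nonneg_right (norm_pow_le' a hn) (norm_nonneg _)

/-- If 𝒜 has property 𝒫 and the Gelfand transform on 𝔄 = 𝒜 ∩ C(X) is dominated by the
sup norm, then the Gelfand transform on 𝒜 is dominated by the sup norm. -/
theorem stmt17
(ι : B →ₐ[ℂ] C(X, A)) (hinj : Function.Injective ι)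
    (κ : A →ₐ[ℂ] B) (hκ : ∀ a : A, ι (κ a) = ContinuousMap.const X a)
    (hκnorm : ∃ c₁ > (0:ℝ), ∃ c₂ > (0:ℝ), ∀ a : A, c₁ * ‖a‖ ≤ ‖κ a‖ ∧ ‖κ a‖ ≤ c₂ * ‖a‖)
    (hdom : ∀ f : B, ‖ι f‖ ≤ ‖f‖)
    (hsep : ∀ x y : X, x ≠ y → ∀ M : Ideal A, M.IsMaximal → ∃ f : B, ι f x - ι f y ∉ M)
    (hss : Ideal.jacobson (⊥ : Ideal A) = ⊥)
    (hadm : ∀ (f : B) (φ : A →ₐ[ℂ] ℂ), ∃ g : B, ∀ x : X, ι g x = algebraMap ℂ A (φ (ι f x)))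
    (hP : ∀ τ : B →ₐ[ℂ] ℂ, ∃ ψ : ↥(scalarSub ι) →ₐ[ℂ] ℂ,
      ∀ (f : B) (g₀ : ↥(scalarSub ι)),
        (∀ x : X, (g₀ : C(X, ℂ)) x = τ (κ (ι f x))) → τ f = ψ g₀)
    (hscalar : ∀ (ψ : ↥(scalarSub ι) →ₐ[ℂ] ℂ) (g₀ : ↥(scalarSub ι)),
      ‖ψ g₀‖ ≤ ‖(g₀ : C(X, ℂ))‖) :
    ∀ (τ : B →ₐ[ℂ] ℂ) (f : B), ‖τ f‖ ≤ ‖ι f‖ := by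
  intro τ f
  set φ : A →ₐ[ℂ] ℂ := τ.comp κ with hφ
  have hcont : Continuous fun x : X => φ (ι f x) :=
    (map_continuous φ).comp (ι f).continuous
  set g₀ : C(X, ℂ) := ⟨_, hcont⟩ with hg₀
  obtain ⟨g, hg⟩ := hadm f φ
  have hmem : g₀ ∈ scalarSub ι := by
    refine ⟨g, ?_⟩
    ext x
    exact hg x
  obtain ⟨ψ, hψ⟩ := hP τ
  have heq : τ f = ψ ⟨g₀, hmem⟩ := hψ f ⟨g₀, hmem⟩ fun x => rfl
  rw [heq]
  refine (hscalar ψ ⟨g₀, hmem⟩).trans ?_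
  refine (ContinuousMap.norm_le _ (norm_nonneg _)).2 fun x => ?_
  calc ‖g₀ x‖ = ‖φ (ι f x)‖ := rfl
    _ ≤ ‖ι f x‖ := char_bound φ _
    _ ≤ ‖ι f‖ := (ι f).norm_coe_le_norm x
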